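/- For k > 0, the function h_k : (0,∞) → ℝ, h_k(t) := exp(k·(log t)²), is convex on (0,∞) if and only if k ≥ 1/8. Consequently, the planar exponentiated deviatoric Hencky energy W_eH : GL⁺(2) → ℝ, W_eH(F) := exp(k·(log(λ₁/λ₂))²) with λ₁ ≥ λ₂ the ordered singular values of F, is polyconvex if and only if k ≥ 1/8. -/

import Mathlib

open Matrix MeasureTheory Set

noncomputable section

/-- The space of real 2×2 matrices. -/
abbrev Mat2 := Matrix (Fin 2) (Fin 2) ℝ

/-- Squared Frobenius norm of a 2×2 matrix. -/
def frobSq (F : Mat2) : ℝ := ∑ i, ∑ j, (F i j) ^ 2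

/-- The special orthogonal group SO(2). -/
def SO2 (R : Mat2) : Prop := R.transpose * R = 1 ∧ R.det = 1

/-- The conformal special orthogonal group CSO(2) = (0,∞)·SO(2). -/
def CSO2 (A : Mat2) : Prop := ∃ a : ℝ, 0 < a ∧ ∃ R : Mat2, SO2 R ∧ A = a • R

/-- Conformal invariance of an energy `W : GL⁺(2) → ℝ`. -/
def ConfInv (W : Mat2 → ℝ) : Prop :=
  ∀ F : Mat2, 0 < F.det → ∀ A B : Mat2, CSO2 A → CSO2 B → W (A * F * B) = W F

/-- `l1, l2` are the singular values of `F` (in either order): they are positive and their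
product and sum of squares agree with `det F` and the squared Frobenius norm of `F`. -/
def SingVals (F : Mat2) (l1 l2 : ℝ) : Prop :=
  0 < l1 ∧ 0 < l2 ∧ l1 * l2 = F.det ∧ l1 ^ 2 + l2 ^ 2 = frobSq F

/-- `l1 ≥ l2` are the ordered singular values of `F`. -/
def OrdSingVals (F : Mat2) (l1 l2 : ℝ) : Prop := SingVals F l1 l2 ∧ l2 ≤ l1

/-- The larger singular value of a 2×2 matrix with positive determinant. -/
def sv1 (F : Mat2) : ℝ :=
  Real.sqrt ((frobSq F + Real.sqrt (frobSq F ^ 2 - 4 * F.det ^ 2)) / 2)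

/-- The smaller singular value of a 2×2 matrix with positive determinant. -/
def sv2 (F : Mat2) : ℝ :=
  Real.sqrt ((frobSq F - Real.sqrt (frobSq F ^ 2 - 4 * F.det ^ 2)) / 2)

/-- The distortion 𝕂(F) = ‖F‖²/(2 det F). -/
def Kdist (F : Mat2) : ℝ := frobSq F / (2 * F.det)

/-- Rank-one convexity of an energy on GL⁺(2). -/
def RankOneConvex (W : Mat2 → ℝ) : Prop :=
  ∀ F : Mat2, 0 < F.det → ∀ H : Mat2, H.rank = 1 → 0 < (F + H).det →
    ∀ t : ℝ, 0 ≤ t → t ≤ 1 → W (F + t • H) ≤ (1 - t) * W F + t * W (F + H)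

/-- The gradient (Jacobian matrix) of a map ϑ : ℝ² → ℝ². -/
def gradMat (ϑ : (Fin 2 → ℝ) → (Fin 2 → ℝ)) (x : Fin 2 → ℝ) : Mat2 :=
  Matrix.of fun i j => fderiv ℝ ϑ x (Pi.single j 1) i

/-- Quasiconvexity of an energy on GL⁺(2). -/
def Quasiconvex2 (W : Mat2 → ℝ) : Prop :=
  ∀ Ω : Set (Fin 2 → ℝ), IsOpen Ω → Bornology.IsBounded Ω →
    ∀ F₀ : Mat2, 0 < F₀.det →
    ∀ ϑ : (Fin 2 → ℝ) → (Fin 2 → ℝ), ContDiff ℝ (⊤ : ℕ∞) ϑ → HasCompactSupport ϑ →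
      tsupport ϑ ⊆ Ω → (∀ x ∈ Ω, 0 < (F₀ + gradMat ϑ x).det) →
      W F₀ * (volume Ω).toReal ≤ ∫ x in Ω, W (F₀ + gradMat ϑ x)

/-- Polyconvexity of an energy on GL⁺(2): `W(F) = P(F, det F)` for some convex
function `P : ℝ^{2×2} × ℝ → ℝ ∪ {+∞}`. -/
def Polyconvex (W : Mat2 → ℝ) : Prop :=
  ∃ P : Mat2 × ℝ → EReal,
    (∀ X Y : Mat2 × ℝ, ∀ t : ℝ, 0 ≤ t → t ≤ 1 →
      P (t • X + (1 - t) • Y) ≤ (t : ℝ) * P X + ((1 - t : ℝ) : EReal) * P Y) ∧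
    (∀ F : Mat2, 0 < F.det → (W F : EReal) = P (F, F.det))

/-- The rank-one convex envelope of `W` on GL⁺(2). -/
def RWenv (W : Mat2 → ℝ) (F : Mat2) : ℝ :=
  sSup {y | ∃ w : Mat2 → ℝ, RankOneConvex w ∧ (∀ X : Mat2, 0 < X.det → w X ≤ W X) ∧ y = w F}

/-- The quasiconvex envelope of `W` on GL⁺(2). -/
def QWenv (W : Mat2 → ℝ) (F : Mat2) : ℝ :=
  sSup {y | ∃ w : Mat2 → ℝ, Quasiconvex2 w ∧ (∀ X : Mat2, 0 < X.det → w X ≤ W X) ∧ y = w F}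

/-- The polyconvex envelope of `W` on GL⁺(2). -/
def PWenv (W : Mat2 → ℝ) (F : Mat2) : ℝ :=
  sSup {y | ∃ w : Mat2 → ℝ, Polyconvex w ∧ (∀ X : Mat2, 0 < X.det → w X ≤ W X) ∧ y = w F}

/-- The monotone-convex envelope of `h : [1,∞) → ℝ`. -/
def CmEnv (h : ℝ → ℝ) (t : ℝ) : ℝ :=
  sSup {y | ∃ p : ℝ → ℝ, ConvexOn ℝ (Set.Ici (1 : ℝ)) p ∧ MonotoneOn p (Set.Ici (1 : ℝ)) ∧
    (∀ s : ℝ, 1 ≤ s → p s ≤ h s) ∧ y = p t}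

/-- The convex envelope of `h : [1,∞) → ℝ`. -/
def CEnv (h : ℝ → ℝ) (t : ℝ) : ℝ :=
  sSup {y | ∃ p : ℝ → ℝ, ConvexOn ℝ (Set.Ici (1 : ℝ)) p ∧
    (∀ s : ℝ, 1 ≤ s → p s ≤ h s) ∧ y = p t}

/-- The special orthogonal group SO(n). -/
def SOnN {n : ℕ} (R : Matrix (Fin n) (Fin n) ℝ) : Prop := R.transpose * R = 1 ∧ R.det = 1

/-- The conformal special orthogonal group CSO(n) = (0,∞)·SO(n). -/
def CSOnN {n : ℕ} (A : Matrix (Fin n) (Fin n) ℝ) : Prop :=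
  ∃ a : ℝ, 0 < a ∧ ∃ R : Matrix (Fin n) (Fin n) ℝ, SOnN R ∧ A = a • R

/-- Conformal invariance of an energy `W : GL⁺(n) → ℝ`. -/
def ConfInvN {n : ℕ} (W : Matrix (Fin n) (Fin n) ℝ → ℝ) : Prop :=
  ∀ F : Matrix (Fin n) (Fin n) ℝ, 0 < F.det →
    ∀ A B : Matrix (Fin n) (Fin n) ℝ, CSOnN A → CSOnN B → W (A * F * B) = W F

/-- Rank-one convexity of an energy on GL⁺(n). -/
def RankOneConvexN {n : ℕ} (W : Matrix (Fin n) (Fin n) ℝ → ℝ) : Prop :=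
  ∀ F : Matrix (Fin n) (Fin n) ℝ, 0 < F.det →
    ∀ H : Matrix (Fin n) (Fin n) ℝ, H.rank = 1 → 0 < (F + H).det →
    ∀ t : ℝ, 0 ≤ t → t ≤ 1 → W (F + t • H) ≤ (1 - t) * W F + t * W (F + H)

/-- The gradient (Jacobian matrix) of a map ϑ : ℝⁿ → ℝⁿ. -/
def gradMatN {n : ℕ} (ϑ : (Fin n → ℝ) → (Fin n → ℝ)) (x : Fin n → ℝ) :
    Matrix (Fin n) (Fin n) ℝ :=
  Matrix.of fun i j => fderiv ℝ ϑ x (Pi.single j 1) i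

/-- Quasiconvexity of an energy on GL⁺(n). -/
def QuasiconvexN {n : ℕ} (W : Matrix (Fin n) (Fin n) ℝ → ℝ) : Prop :=
  ∀ Ω : Set (Fin n → ℝ), IsOpen Ω → Bornology.IsBounded Ω →
    ∀ F₀ : Matrix (Fin n) (Fin n) ℝ, 0 < F₀.det →
    ∀ ϑ : (Fin n → ℝ) → (Fin n → ℝ), ContDiff ℝ (⊤ : ℕ∞) ϑ → HasCompactSupport ϑ →
      tsupport ϑ ⊆ Ω → (∀ x ∈ Ω, 0 < (F₀ + gradMatN ϑ x).det) →
      W F₀ * (volume Ω).toReal ≤ ∫ x in Ω, W (F₀ + gradMatN ϑ x)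

/-- The rank-one convex envelope of `W` on GL⁺(n). -/
def RWenvN {n : ℕ} (W : Matrix (Fin n) (Fin n) ℝ → ℝ) (F : Matrix (Fin n) (Fin n) ℝ) : ℝ :=
  sSup {y | ∃ w : Matrix (Fin n) (Fin n) ℝ → ℝ, RankOneConvexN w ∧
    (∀ X : Matrix (Fin n) (Fin n) ℝ, 0 < X.det → w X ≤ W X) ∧ y = w F}

/-- The quasiconvex envelope of `W` on GL⁺(n). -/
def QWenvN {n : ℕ} (W : Matrix (Fin n) (Fin n) ℝ → ℝ) (F : Matrix (Fin n) (Fin n) ℝ) : ℝ :=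
  sSup {y | ∃ w : Matrix (Fin n) (Fin n) ℝ → ℝ, QuasiconvexN w ∧
    (∀ X : Matrix (Fin n) (Fin n) ℝ, 0 < X.det → w X ≤ W X) ∧ y = w F}

end
/-- The planar exponentiated deviatoric Hencky energy `W_eH(F) = exp(k (log(λ₁/λ₂))²)`. -/
noncomputable def WeH (k : ℝ) (F : Mat2) : ℝ := Real.exp (k * (Real.log (sv1 F / sv2 F)) ^ 2)

/-!
Write `z, w ∈ ℂ` for the conformal and anticonformal parts of `F`. Then `‖F‖² = 2(|z|² + |w|²)`
and `det F = |z|² - |w|²`, so the singular values are `|z| + |w|` and `||z| - |w||`. Hence `λ₁`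
is convex in `F` (a sum of norms of linear maps) and `λ₁ / λ₂ = λ₁² / det F` on `GL⁺(2)`.

The second derivative of `h_k` is `h_k(t) · 2k (2k log² t - log t + 1) / t²`, and the quadratic
`2k L² - L + 1` is nonnegative for all `L` iff `k ≥ 1/8`; otherwise it is negative at
`L = 1 / (4k)`. For `k ≥ 1/8`, `h_k` is convex and increasing on `[1, ∞)`, and
`(F, δ) ↦ λ₁(F)² / δ` is jointly convex for `δ > 0`, so `P(F, δ) = h_k(max(λ₁(F)² / δ, 1))`,
extended by `+∞` to `δ ≤ 0`, is a convex representative of `W_eH`. Conversely,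
`W_eH(diag(t, 1)) = h_k(t)` and `t ↦ (diag(t, 1), t)` is affine, so polyconvexity of `W_eH`
forces convexity of `h_k`.
-/

open Real

lemma ConvexOn.nonneg_of_hasDerivAt_of_hasDerivAt {s : Set ℝ} {f f' : ℝ → ℝ} {x f'' : ℝ}
    (hf : ConvexOn ℝ s f) (hs : IsOpen s) (hx : x ∈ s)
    (hf' : ∀ y ∈ s, HasDerivAt f (f' y) y) (hf'' : HasDerivAt f' f'' x) : 0 ≤ f'' := by
  have hmono : MonotoneOn f' s :=
    (hf.monotoneOn_deriv fun y hy => (hf' y hy).differentiableAt).congr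
      fun y hy => (hf' y hy).deriv
  refine hf''.hasDerivWithinAt.nonneg_of_monotoneOn ?_ hmono
  rw [accPt_principal_iff_nhdsWithin, sdiff_eq,
    nhdsWithin_inter_of_mem (mem_nhdsWithin_of_mem_nhds (hs.mem_nhds hx))]
  infer_instance

lemma add_sq_div_add_le {a b x y u v : ℝ} (ha : 0 ≤ a) (hb : 0 ≤ b) (hu : 0 < u) (hv : 0 < v) :
    (a * x + b * y) ^ 2 / (a * u + b * v) ≤ a * (x ^ 2 / u) + b * (y ^ 2 / v) := by
  rcases (add_nonneg (mul_nonneg ha hu.le) (mul_nonneg hb hv.le)).eq_or_lt with h | h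
  · rw [← h, div_zero]; positivity
  obtain ⟨X, rfl⟩ : ∃ X, x = X * u := ⟨x / u, by field_simp⟩
  obtain ⟨Y, rfl⟩ : ∃ Y, y = Y * v := ⟨y / v, by field_simp⟩
  rw [div_le_iff₀ h]
  field_simp
  nlinarith [mul_nonneg (mul_nonneg (mul_nonneg ha hb) (mul_nonneg hu.le hv.le)) (sq_nonneg (X - Y))]

section

variable {E : Type*}

open Classical in
noncomputable def extendTop (s : Set E) (f : E → ℝ) (x : E) : EReal :=
  if x ∈ s then f x else ⊤

lemma extendTop_of_mem {s : Set E} (f : E → ℝ) {x : E} (hx : x ∈ s) : extendTop s f x = f x :=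
  if_pos hx

lemma extendTop_of_notMem {s : Set E} (f : E → ℝ) {x : E} (hx : x ∉ s) : extendTop s f x = ⊤ :=
  if_neg hx

lemma coe_mul_extendTop_ne_bot {s : Set E} (f : E → ℝ) (x : E) {t : ℝ} (ht : 0 < t) :
    (t : EReal) * extendTop s f x ≠ ⊥ := by
  by_cases hx : x ∈ s
  · rw [extendTop_of_mem f hx, ← EReal.coe_mul]; exact EReal.coe_ne_bot _
  · rw [extendTop_of_notMem f hx, EReal.coe_mul_top_of_pos ht]; exact top_ne_bot

variable [AddCommGroup E] [Module ℝ E]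

lemma ConvexOn.extendTop_le {s : Set E} {f : E → ℝ} (hf : ConvexOn ℝ s f) (x y : E) (t : ℝ)
    (ht0 : 0 ≤ t) (ht1 : t ≤ 1) :
    extendTop s f (t • x + (1 - t) • y)
      ≤ (t : EReal) * extendTop s f x + ((1 - t : ℝ) : EReal) * extendTop s f y := by
  rcases ht0.eq_or_lt with rfl | ht0
  · simp
  rcases ht1.eq_or_lt with rfl | ht1
  · simp
  have hs : 0 < 1 - t := sub_pos.2 ht1
  by_cases hx : x ∈ s
  · by_cases hy : y ∈ s
    · rw [extendTop_of_mem f hx, extendTop_of_mem f hy,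
        extendTop_of_mem f (hf.1 hx hy ht0.le hs.le (by ring)), ← EReal.coe_mul, ← EReal.coe_mul,
        ← EReal.coe_add, EReal.coe_le_coe_iff]
      exact hf.2 hx hy ht0.le hs.le (by ring)
    · rw [extendTop_of_notMem f hy, EReal.coe_mul_top_of_pos hs,
        EReal.add_top_of_ne_bot (coe_mul_extendTop_ne_bot f x ht0)]
      exact le_top
  · rw [extendTop_of_notMem f hx, EReal.coe_mul_top_of_pos ht0,
      EReal.top_add_of_ne_bot (coe_mul_extendTop_ne_bot f y hs)]
    exact le_top

lemma ConvexOn.comp_of_mapsTo {s : Set E} {t : Set ℝ} {f : E → ℝ} {g : ℝ → ℝ}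
    (hg : ConvexOn ℝ t g) (hgm : MonotoneOn g t) (hf : ConvexOn ℝ s f) (hfst : MapsTo f s t) :
    ConvexOn ℝ s (g ∘ f) :=
  ⟨hf.1, fun _ hx _ hy _ _ ha hb hab =>
    (hgm (hfst (hf.1 hx hy ha hb hab)) (hg.1 (hfst hx) (hfst hy) ha hb hab)
      (hf.2 hx hy ha hb hab)).trans (hg.2 (hfst hx) (hfst hy) ha hb hab)⟩

lemma ConvexOn.sq_div_snd {N : E → ℝ} (hN : ConvexOn ℝ univ N) (hN0 : ∀ x, 0 ≤ N x) :
    ConvexOn ℝ {p : E × ℝ | 0 < p.2} (fun p => N p.1 ^ 2 / p.2) := by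
  refine ⟨convex_halfSpace_gt (LinearMap.snd ℝ E ℝ).isLinear 0, fun p hp q hq a b ha hb hab => ?_⟩
  have hd : 0 < a * p.2 + b * q.2 := (convex_Ioi 0) hp hq ha hb hab
  have hN_le : N (a • p.1 + b • q.1) ≤ a * N p.1 + b * N q.1 :=
    hN.2 trivial trivial ha hb hab
  calc N (a • p + b • q).1 ^ 2 / (a • p + b • q).2
      = N (a • p.1 + b • q.1) ^ 2 / (a * p.2 + b * q.2) := rfl
    _ ≤ (a * N p.1 + b * N q.1) ^ 2 / (a * p.2 + b * q.2) := by gcongr; exact hN0 _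
    _ ≤ a * (N p.1 ^ 2 / p.2) + b * (N q.1 ^ 2 / q.2) := add_sq_div_add_le ha hb hp hq

end

noncomputable def expLogSq (k t : ℝ) : ℝ := exp (k * log t ^ 2)

lemma expLogSq_inv (k t : ℝ) : expLogSq k t⁻¹ = expLogSq k t := by
  simp only [expLogSq, log_inv, neg_sq]

lemma monotoneOn_expLogSq {k : ℝ} (hk : 0 ≤ k) : MonotoneOn (expLogSq k) (Ici 1) := by
  intro x hx y hy hxy
  have hlog : log x ≤ log y := log_le_log (zero_lt_one.trans_le hx) hxy
  have hlog_sq := pow_le_pow_left₀ (log_nonneg hx) hlog 2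
  exact exp_le_exp.2 (mul_le_mul_of_nonneg_left hlog_sq hk)

lemma hasDerivAt_expLogSq (k : ℝ) {t : ℝ} (ht : 0 < t) :
    HasDerivAt (expLogSq k) (expLogSq k t * (2 * k * log t / t)) t := by
  refine (((hasDerivAt_log ht.ne').pow 2).const_mul k).exp.congr_deriv ?_
  simp only [expLogSq, Pi.pow_apply]
  field_simp
  ring

lemma hasDerivAt_deriv_expLogSq (k : ℝ) {t : ℝ} (ht : 0 < t) :
    HasDerivAt (fun t => expLogSq k t * (2 * k * log t / t))
      (expLogSq k t * (2 * k * (2 * k * log t ^ 2 - log t + 1) / t ^ 2)) t := by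
  refine ((hasDerivAt_expLogSq k ht).mul
    (((hasDerivAt_log ht.ne').const_mul (2 * k)).div (hasDerivAt_id t) ht.ne')).congr_deriv ?_
  simp only [Pi.div_apply, id]
  field_simp
  ring

lemma convexOn_expLogSq {k : ℝ} (hk : 1 / 8 ≤ k) : ConvexOn ℝ (Ioi 0) (expLogSq k) := by
  refine convexOn_of_hasDerivWithinAt2_nonneg (convex_Ioi 0)
    (f' := fun t => expLogSq k t * (2 * k * log t / t))
    (f'' := fun t => expLogSq k t * (2 * k * (2 * k * log t ^ 2 - log t + 1) / t ^ 2))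
    (fun t ht => (hasDerivAt_expLogSq k ht).continuousAt.continuousWithinAt)
    (fun t ht => ?_) (fun t ht => ?_) (fun t ht => ?_)
  all_goals rw [interior_Ioi] at ht
  · exact (hasDerivAt_expLogSq k ht).hasDerivWithinAt.mono interior_subset
  · exact (hasDerivAt_deriv_expLogSq k ht).hasDerivWithinAt.mono interior_subset
  · have hq : 0 ≤ 2 * k * log t ^ 2 - log t + 1 := by
      nlinarith [sq_nonneg (log t / 2 - 1), mul_nonneg (sub_nonneg.2 hk) (sq_nonneg (log t))]
    have hk0 : 0 < k := by linarith
    unfold expLogSq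
    positivity

lemma le_of_convexOn_expLogSq {k : ℝ} (hk : 0 < k) (h : ConvexOn ℝ (Ioi 0) (expLogSq k)) :
    1 / 8 ≤ k := by
  set t₀ := exp (1 / (4 * k))
  have ht₀ : 0 < t₀ := exp_pos _
  have hsecond := h.nonneg_of_hasDerivAt_of_hasDerivAt isOpen_Ioi ht₀
    (fun t ht => hasDerivAt_expLogSq k ht) (hasDerivAt_deriv_expLogSq k ht₀)
  have hq : 2 * k * log t₀ ^ 2 - log t₀ + 1 = 1 - 1 / (8 * k) := by
    rw [log_exp]; field_simp; ring
  rw [hq] at hsecond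
  by_contra hlt
  have hq_neg : 1 - 1 / (8 * k) < 0 := by
    rw [sub_neg, lt_div_iff₀ (by positivity)]; linarith
  have hsecond_neg : expLogSq k t₀ * (2 * k * (1 - 1 / (8 * k)) / t₀ ^ 2) < 0 :=
    mul_neg_of_pos_of_neg (exp_pos _)
      (div_neg_of_neg_of_pos (mul_neg_of_pos_of_neg (by positivity) hq_neg) (by positivity))
  linarith

noncomputable def conformalPart : Mat2 →ₗ[ℝ] ℂ where
  toFun F := ⟨(F 0 0 + F 1 1) / 2, (F 1 0 - F 0 1) / 2⟩
  map_add' F G := by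
    apply Complex.ext <;> simp only [Matrix.add_apply, Complex.add_re, Complex.add_im] <;> ring
  map_smul' c F := by
    apply Complex.ext <;>
      simp only [Matrix.smul_apply, smul_eq_mul, RingHom.id_apply, Complex.real_smul, Complex.mul_re,
        Complex.mul_im, Complex.ofReal_re, Complex.ofReal_im, zero_mul, sub_zero, add_zero] <;>
      ring

noncomputable def anticonformalPart : Mat2 →ₗ[ℝ] ℂ where
  toFun F := ⟨(F 0 0 - F 1 1) / 2, (F 1 0 + F 0 1) / 2⟩
  map_add' F G := by
    apply Complex.ext <;> simp only [Matrix.add_apply, Complex.add_re, Complex.add_im] <;> ring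
  map_smul' c F := by
    apply Complex.ext <;>
      simp only [Matrix.smul_apply, smul_eq_mul, RingHom.id_apply, Complex.real_smul, Complex.mul_re,
        Complex.mul_im, Complex.ofReal_re, Complex.ofReal_im, zero_mul, sub_zero, add_zero] <;>
      ring

lemma sq_norm_conformalPart (F : Mat2) :
    ‖conformalPart F‖ ^ 2 = ((F 0 0 + F 1 1) ^ 2 + (F 1 0 - F 0 1) ^ 2) / 4 := by
  rw [Complex.sq_norm, Complex.normSq_apply]
  simp only [conformalPart, LinearMap.coe_mk, AddHom.coe_mk]
  ring

lemma sq_norm_anticonformalPart (F : Mat2) :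
    ‖anticonformalPart F‖ ^ 2 = ((F 0 0 - F 1 1) ^ 2 + (F 1 0 + F 0 1) ^ 2) / 4 := by
  rw [Complex.sq_norm, Complex.normSq_apply]
  simp only [anticonformalPart, LinearMap.coe_mk, AddHom.coe_mk]
  ring

lemma frobSq_eq_sq_norm_add (F : Mat2) :
    frobSq F = 2 * (‖conformalPart F‖ ^ 2 + ‖anticonformalPart F‖ ^ 2) := by
  simp only [sq_norm_conformalPart, sq_norm_anticonformalPart, frobSq, Fin.sum_univ_two]
  ring

lemma det_eq_sq_norm_sub (F : Mat2) :
    F.det = ‖conformalPart F‖ ^ 2 - ‖anticonformalPart F‖ ^ 2 := by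
  rw [sq_norm_conformalPart, sq_norm_anticonformalPart, det_fin_two]
  ring

lemma frobSq_sq_sub_four_mul_det_sq (F : Mat2) :
    frobSq F ^ 2 - 4 * F.det ^ 2 = (4 * (‖conformalPart F‖ * ‖anticonformalPart F‖)) ^ 2 := by
  rw [frobSq_eq_sq_norm_add, det_eq_sq_norm_sub]
  ring

lemma sv1_eq (F : Mat2) : sv1 F = ‖conformalPart F‖ + ‖anticonformalPart F‖ := by
  rw [sv1, frobSq_sq_sub_four_mul_det_sq, sqrt_sq (by positivity), frobSq_eq_sq_norm_add,
    ← sqrt_sq (by positivity : 0 ≤ ‖conformalPart F‖ + ‖anticonformalPart F‖)]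
  ring_nf

lemma sv2_eq (F : Mat2) : sv2 F = |‖conformalPart F‖ - ‖anticonformalPart F‖| := by
  rw [sv2, frobSq_sq_sub_four_mul_det_sq, sqrt_sq (by positivity), frobSq_eq_sq_norm_add,
    ← sqrt_sq_eq_abs]
  ring_nf

lemma convexOn_sv1 : ConvexOn ℝ univ sv1 := by
  rw [show sv1 = fun F => ‖conformalPart F‖ + ‖anticonformalPart F‖ from funext sv1_eq]
  exact (convexOn_univ_norm.comp_linearMap conformalPart).add
    (convexOn_univ_norm.comp_linearMap anticonformalPart)

lemma det_le_sv1_sq (F : Mat2) : F.det ≤ sv1 F ^ 2 := by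
  rw [sv1_eq, det_eq_sq_norm_sub]
  nlinarith [norm_nonneg (conformalPart F), norm_nonneg (anticonformalPart F)]

lemma sv1_div_sv2 {F : Mat2} (hF : 0 < F.det) : sv1 F / sv2 F = sv1 F ^ 2 / F.det := by
  rw [det_eq_sq_norm_sub] at hF ⊢
  have hlt : ‖anticonformalPart F‖ < ‖conformalPart F‖ := by
    nlinarith [norm_nonneg (conformalPart F), norm_nonneg (anticonformalPart F)]
  rw [sv1_eq, sv2_eq, abs_of_pos (sub_pos.2 hlt), div_eq_div_iff (sub_pos.2 hlt).ne' hF.ne']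
  ring

lemma WeH_eq_expLogSq {k : ℝ} {F : Mat2} (hF : 0 < F.det) :
    WeH k F = expLogSq k (sv1 F ^ 2 / F.det) := by
  rw [WeH, sv1_div_sv2 hF, expLogSq]

lemma polyconvex_of_convexOn {W : Mat2 → ℝ} {f : Mat2 × ℝ → ℝ}
    (hf : ConvexOn ℝ {p | 0 < p.2} f) (hW : ∀ F : Mat2, 0 < F.det → W F = f (F, F.det)) :
    Polyconvex W :=
  ⟨extendTop {p | 0 < p.2} f, hf.extendTop_le,
    fun F hF => by rw [hW F hF, extendTop_of_mem f (show 0 < (F, F.det).2 from hF)]⟩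

lemma convexOn_expLogSq_max_sv1_sq_div {k : ℝ} (hk : 1 / 8 ≤ k) :
    ConvexOn ℝ {p : Mat2 × ℝ | 0 < p.2} fun p => expLogSq k (max (sv1 p.1 ^ 2 / p.2) 1) :=
  ((convexOn_expLogSq hk).subset (Ici_subset_Ioi.2 one_pos) (convex_Ici 1)).comp_of_mapsTo
    (monotoneOn_expLogSq (by linarith))
    ((convexOn_sv1.sq_div_snd fun F => sqrt_nonneg _).sup
      (convexOn_const 1 ((convex_Ioi 0).linear_preimage (LinearMap.snd ℝ Mat2 ℝ))))
    fun _ _ => mem_Ici.2 (le_max_right _ _)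

lemma polyconvex_WeH {k : ℝ} (hk : 1 / 8 ≤ k) : Polyconvex (WeH k) :=
  polyconvex_of_convexOn (convexOn_expLogSq_max_sv1_sq_div hk) fun F hF => by
    rw [WeH_eq_expLogSq hF, max_eq_left ((one_le_div hF).2 (det_le_sv1_sq F))]

lemma det_diagonal_fin_two (s : ℝ) : (diagonal ![s, 1]).det = s := by
  simp [det_diagonal, Fin.prod_univ_two]

lemma sv1_diagonal {s : ℝ} (hs : 0 < s) : sv1 (diagonal ![s, 1]) = max s 1 := by
  have hz : conformalPart (diagonal ![s, 1]) = ((s + 1) / 2 : ℝ) := by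
    apply Complex.ext <;> simp [conformalPart]
  have hw : anticonformalPart (diagonal ![s, 1]) = ((s - 1) / 2 : ℝ) := by
    apply Complex.ext <;> simp [anticonformalPart]
  rw [sv1_eq, hz, hw, Complex.norm_real, Complex.norm_real, norm_eq_abs, norm_eq_abs,
    abs_of_pos (by linarith)]
  rcases le_total 1 s with h | h
  · rw [abs_of_nonneg (by linarith), max_eq_left h]; ring
  · rw [abs_of_nonpos (by linarith), max_eq_right h]; ring

lemma WeH_diagonal (k : ℝ) {s : ℝ} (hs : 0 < s) : WeH k (diagonal ![s, 1]) = expLogSq k s := by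
  rw [WeH_eq_expLogSq (by rwa [det_diagonal_fin_two]), sv1_diagonal hs, det_diagonal_fin_two]
  rcases le_total 1 s with h | h
  · rw [max_eq_left h, sq, mul_div_cancel_right₀ _ hs.ne']
  · rw [max_eq_right h, one_pow, one_div, expLogSq_inv]

lemma convexOn_expLogSq_of_polyconvex {k : ℝ} (h : Polyconvex (WeH k)) :
    ConvexOn ℝ (Ioi 0) (expLogSq k) := by
  obtain ⟨P, hP, hPW⟩ := h
  have hP_diagonal : ∀ s : ℝ, 0 < s → P (diagonal ![s, 1], s) = expLogSq k s := fun s hs => by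
    have hW := hPW _ (by rwa [det_diagonal_fin_two])
    rwa [det_diagonal_fin_two, WeH_diagonal k hs, eq_comm] at hW
  refine ⟨convex_Ioi 0, fun x hx y hy a b ha hb hab => ?_⟩
  obtain rfl : b = 1 - a := by linarith
  have hline : a • ((diagonal ![x, 1], x) : Mat2 × ℝ) + (1 - a) • (diagonal ![y, 1], y)
      = (diagonal ![a * x + (1 - a) * y, 1], a * x + (1 - a) * y) := by
    refine Prod.ext ?_ (by simp)
    ext i j
    fin_cases i <;> fin_cases j <;> simp
  have hz : 0 < a * x + (1 - a) * y := (convex_Ioi 0) hx hy ha hb hab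
  have hP_line := hP (diagonal ![x, 1], x) (diagonal ![y, 1], y) a ha (by linarith)
  rw [hline, hP_diagonal _ hx, hP_diagonal _ hy, hP_diagonal _ hz] at hP_line
  simp only [smul_eq_mul]
  exact_mod_cast hP_line

/-- For `k > 0`, the function `h_k(t) = exp(k (log t)²)` is convex on `(0,∞)`
iff `k ≥ 1/8`; consequently the planar exponentiated deviatoric Hencky energy is polyconvex
iff `k ≥ 1/8`. -/
theorem exponentiated_Hencky_polyconvex_iff (k : ℝ) (hk : 0 < k) :
    (ConvexOn ℝ (Set.Ioi (0 : ℝ)) (fun t : ℝ => Real.exp (k * (Real.log t) ^ 2)) ↔ 1 / 8 ≤ k) ∧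
      (Polyconvex (WeH k) ↔ 1 / 8 ≤ k) := by
  have hconvex : ConvexOn ℝ (Ioi 0) (expLogSq k) ↔ 1 / 8 ≤ k :=
    ⟨le_of_convexOn_expLogSq hk, convexOn_expLogSq⟩
  exact ⟨hconvex, fun h => hconvex.1 (convexOn_expLogSq_of_polyconvex h), polyconvex_WeH⟩
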